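/- Let ζ be a 1-cycle of K and η a connected 1-cocycle of K. If some cycle ζ₀ homologous to ζ intersects η in exactly m edges, then there exists a cycle γ homologous to ζ that also intersects η in exactly m edges and such that the dual edges corresponding to the edges of γ ∩ η induce a connected subgraph of the dual graph D_K. -/

import Mathlib

/-!
Adding the boundary `∂T` of a set `T` of triangles to `ζ₀` keeps it a cycle in the same
homology class and replaces `ζ₀ ∩ η` by `(ζ₀ ∩ η) ∆ (∂T ∩ η)`. Every triangle contains zero or
two edges of `η`, so summing the triangles along a dual path from `a` to `b` (which exists since
`η` is connected) gives `∂T ∩ η = {a} ∆ {b}`; hence every even subset of `η` is such a trace.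
Growing a set one dual-adjacent edge at a time, `η` contains a connected subset `F` with `m`
edges, and `(ζ₀ ∩ η) ∆ F` is even, so `ζ₀ + ∂T` meets `η` exactly in `F` for a suitable `T`.
-/

namespace ArxivCut

noncomputable section

attribute [local instance] Classical.propDecidable

open Finset

variable {V : Type*} [Fintype V] [DecidableEq V]

/-- A finite abstract simplicial complex on the vertex type `V`. -/
structure SComplex (V : Type*) [DecidableEq V] where
  faces : Finset (Finset V)
  nonempty_mem : ∀ s ∈ faces, s.Nonempty
  down_closed : ∀ s ∈ faces, ∀ t ⊆ s, t.Nonempty → t ∈ faces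

/-- The boundary of a `𝔽₂`-chain (a chain is identified with its set of simplices):
a simplex `τ` lies in the boundary iff it is a facet of an odd number of members. -/
def bdry (c : Finset (Finset V)) : Finset (Finset V) :=
  Finset.univ.filter fun τ => Odd ((c.filter fun σ => τ ⊆ σ ∧ τ.card + 1 = σ.card)).card

/-- `c` is an `r`-chain of `K` (a set of `r`-simplices of `K`). -/
def IsRChain (K : SComplex V) (r : ℕ) (c : Finset (Finset V)) : Prop :=
  ∀ σ ∈ c, σ ∈ K.faces ∧ σ.card = r + 1

/-- `c` is an `r`-cycle of `K`. -/
def IsRCycle (K : SComplex V) (r : ℕ) (c : Finset (Finset V)) : Prop :=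
  IsRChain K r c ∧ bdry c = ∅

/-- `z` is a bounding `r`-cycle of `K`: it is the boundary of an `(r+1)`-chain of `K`. -/
def IsBounding (K : SComplex V) (r : ℕ) (z : Finset (Finset V)) : Prop :=
  ∃ b, IsRChain K (r + 1) b ∧ bdry b = z

/-- Two `r`-chains are homologous in `K` if their `𝔽₂`-sum (symmetric difference) bounds. -/
def Homologous (K : SComplex V) (r : ℕ) (a b : Finset (Finset V)) : Prop :=
  IsBounding K r (symmDiff a b)


/-- `e` is an edge (1-simplex) of `K`. -/
def IsEdge (K : SComplex V) (e : Finset V) : Prop := e ∈ K.faces ∧ e.card = 2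

/-- `t` is a triangle (2-simplex) of `K`. -/
def IsTri (K : SComplex V) (t : Finset V) : Prop := t ∈ K.faces ∧ t.card = 3

/-- The 1-skeleton of `K`, as a simple graph on the vertex type. -/
def skeleton (K : SComplex V) : SimpleGraph V where
  Adj u w := u ≠ w ∧ ({u, w} : Finset V) ∈ K.faces
  symm := by
    constructor
    intro u w h
    refine ⟨h.1.symm, ?_⟩
    rw [Finset.pair_comm]
    exact h.2
  loopless := by constructor; intro v h; exact h.1 rfl

/-- `K` is a triangulation of a closed surface: a finite connected 2-dimensional
simplicial complex in which every edge is contained in exactly two triangles and the link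
of every vertex is a single cycle (equivalently, the triangles around each vertex are
connected through edges containing that vertex). -/
structure IsClosedSurface (K : SComplex V) : Prop where
  vert_mem : ∀ v : V, ({v} : Finset V) ∈ K.faces
  dim_le : ∀ s ∈ K.faces, s.card ≤ 3
  pure2 : ∀ s ∈ K.faces, ∃ t, IsTri K t ∧ s ⊆ t
  edge_in_two_tri : ∀ e, IsEdge K e →
    (Finset.univ.filter fun t => IsTri K t ∧ e ⊆ t).card = 2
  conn : (skeleton K).Connected
  link_single_cycle : ∀ v : V, ∀ t₁ t₂, IsTri K t₁ → IsTri K t₂ → v ∈ t₁ → v ∈ t₂ →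
    Relation.ReflTransGen
      (fun a b => IsTri K a ∧ IsTri K b ∧ v ∈ a ∧ v ∈ b ∧ (a ∩ b).card = 2) t₁ t₂

/-- `c` is a 1-cycle of `K`: a set of edges of `K` meeting every vertex in an even number
of edges. -/
def IsOneCycle (K : SComplex V) (c : Finset (Finset V)) : Prop :=
  (∀ e ∈ c, IsEdge K e) ∧ ∀ v : V, Even ((c.filter fun e => v ∈ e).card)

/-- `z` is a sum of boundaries of triangles of `K`. -/
def IsBounding1 (K : SComplex V) (z : Finset (Finset V)) : Prop :=
  ∃ T : Finset (Finset V), (∀ t ∈ T, IsTri K t) ∧ bdry T = z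

/-- Two 1-chains are homologous: their sum (symmetric difference) is a sum of triangle
boundaries. -/
def Homol1 (K : SComplex V) (a b : Finset (Finset V)) : Prop :=
  IsBounding1 K (symmDiff a b)

/-- `η` is a 1-cocycle of `K`: a set of edges of `K` such that every triangle of `K`
contains an even number of edges of `η`. -/
def IsCocycle (K : SComplex V) (η : Finset (Finset V)) : Prop :=
  (∀ e ∈ η, IsEdge K e) ∧ ∀ t, IsTri K t → Even ((η.filter fun e => e ⊆ t).card)

/-- The dual edges corresponding to the edge set `F` : two distinct triangles of `K` are
related if they share an edge belonging to `F`. -/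
def DualStep (K : SComplex V) (F : Finset (Finset V)) (t₁ t₂ : Finset V) : Prop :=
  t₁ ≠ t₂ ∧ IsTri K t₁ ∧ IsTri K t₂ ∧ ∃ e ∈ F, e ⊆ t₁ ∧ e ⊆ t₂

/-- A triangle incident to the edge set `F` (a node of the subgraph of the dual graph
induced by the dual edges corresponding to `F`). -/
def Incident (K : SComplex V) (F : Finset (Finset V)) (t : Finset V) : Prop :=
  IsTri K t ∧ ∃ e ∈ F, e ⊆ t

/-- The subgraph of the dual graph `D_K` induced by the dual edges corresponding to the
edge set `F` is connected. -/
def DualConnected (K : SComplex V) (F : Finset (Finset V)) : Prop :=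
  ∀ t₁ t₂, Incident K F t₁ → Incident K F t₂ →
    Relation.ReflTransGen (DualStep K F) t₁ t₂

/-- `S` is a feasible set for the 1-cycle `ζ`: it intersects every cycle homologous
to `ζ`. -/
def Feasible (K : SComplex V) (ζ S : Finset (Finset V)) : Prop :=
  ∀ γ, IsOneCycle K γ → Homol1 K γ ζ → (γ ∩ S).Nonempty

/-- The coboundary `δ(A)` of a set `A` of vertices: the set of edges of `K` with exactly
one endpoint in `A`. -/
def cobdryV (K : SComplex V) (A : Finset V) : Finset (Finset V) :=
  Finset.univ.filter fun e => IsEdge K e ∧ (e ∩ A).card = 1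

/-- Two cocycles are cohomologous: their sum (symmetric difference) is a coboundary. -/
def Cohomologous (K : SComplex V) (η η' : Finset (Finset V)) : Prop :=
  ∃ A : Finset V, symmDiff η η' = cobdryV K A

open scoped symmDiff

section SymmDiff

variable {α : Type*} [DecidableEq α]

lemma card_symmDiff_add_two_mul_card_inter (s t : Finset α) :
    (s ∆ t).card + 2 * (s ∩ t).card = s.card + t.card := by
  have hsub : s ∩ t ⊆ s ∪ t := inter_subset_left.trans subset_union_left
  have hsd : s ∆ t = (s ∪ t) \ (s ∩ t) := symmDiff_eq_sup_sdiff_inf s t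
  have := card_le_card hsub
  have := card_union_add_card_inter s t
  rw [hsd, card_sdiff_of_subset hsub]
  omega

lemma even_card_symmDiff_iff {s t : Finset α} :
    Even (s ∆ t).card ↔ (Even s.card ↔ Even t.card) := by
  have := card_symmDiff_add_two_mul_card_inter s t
  simp only [Nat.even_iff]
  omega

lemma even_card_symmDiff_of_card_eq {s t : Finset α} (h : s.card = t.card) :
    Even (s ∆ t).card :=
  even_card_symmDiff_iff.2 (h ▸ Iff.rfl)

lemma filter_symmDiff (p : α → Prop) [DecidablePred p] (s t : Finset α) :
    (s ∆ t).filter p = s.filter p ∆ t.filter p := by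
  ext x
  simp only [mem_filter, mem_symmDiff]
  tauto

lemma symmDiff_inter (s t u : Finset α) : (s ∆ t) ∩ u = (s ∩ u) ∆ (t ∩ u) := by
  ext x
  simp only [mem_inter, mem_symmDiff]
  tauto

lemma forall_mem_symmDiff {p : α → Prop} {s t : Finset α} (hs : ∀ x ∈ s, p x)
    (ht : ∀ x ∈ t, p x) : ∀ x ∈ s ∆ t, p x := fun x hx =>
  (mem_symmDiff.1 hx).elim (fun h => hs x h.1) (fun h => ht x h.1)

lemma mem_of_even_card {B : Set (Finset α)} {s P : Finset α} (hempty : ∅ ∈ B)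
    (hsymmDiff : ∀ x ∈ B, ∀ y ∈ B, x ∆ y ∈ B) (hpair : ∀ a ∈ s, ∀ b ∈ s, {a} ∆ {b} ∈ B)
    (hPs : P ⊆ s) (hP : Even P.card) : P ∈ B := by
  suffices ∀ P ⊆ s, (Even P.card → P ∈ B) ∧ (∀ c ∈ s, Odd P.card → P ∆ {c} ∈ B) from
    (this P hPs).1 hP
  intro P
  induction P using Finset.induction_on with
  | empty => exact fun _ => ⟨fun _ => hempty, fun _ _ h => absurd h (by simp)⟩
  | insert a P ha ih =>
    intro hs
    obtain ⟨ihEven, ihOdd⟩ := ih ((subset_insert a P).trans hs)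
    have has : a ∈ s := hs (mem_insert_self a P)
    have hins : insert a P = P ∆ {a} := by
      rw [symmDiff_eq_union (disjoint_singleton_right.2 ha), union_comm]; rfl
    rw [card_insert_of_notMem ha, hins, Nat.even_add_one, Nat.odd_add_one, Nat.not_odd_iff_even]
    refine ⟨fun h => ihOdd a has (Nat.not_even_iff_odd.1 h), fun c hc h => ?_⟩
    rw [symmDiff_assoc]
    exact hsymmDiff _ (ihEven h) _ (hpair a has c hc)

end SymmDiff

section

variable {V : Type*} [DecidableEq V] {K : SComplex V} {η F G : Finset (Finset V)}

lemma IsOneCycle.symmDiff {a b : Finset (Finset V)} (ha : IsOneCycle K a)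
    (hb : IsOneCycle K b) : IsOneCycle K (a ∆ b) := by
  refine ⟨forall_mem_symmDiff ha.1 hb.1, fun v => ?_⟩
  rw [filter_symmDiff]
  exact even_card_symmDiff_iff.2 (iff_of_true (ha.2 v) (hb.2 v))

lemma IsCocycle.filter_subset_eq_pair (hη : IsCocycle K η) {t a b : Finset V} (ht : IsTri K t)
    (ha : a ∈ η) (hb : b ∈ η) (hat : a ⊆ t) (hbt : b ⊆ t) (hab : a ≠ b) :
    η.filter (· ⊆ t) = {a, b} := by
  have hsub : {a, b} ⊆ η.filter (· ⊆ t) := by simp [insert_subset_iff, ha, hb, hat, hbt]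
  have hle : (η.filter (· ⊆ t)).card ≤ 3 :=
    calc _ ≤ (t.powersetCard 2).card := card_le_card fun e he =>
          mem_powersetCard.2 ⟨(mem_filter.1 he).2, (hη.1 e (mem_filter.1 he).1).2⟩
      _ = 3 := by rw [card_powersetCard, ht.2]; rfl
  have h2 := card_le_card hsub
  obtain ⟨k, hk⟩ := hη.2 t ht
  rw [card_pair hab] at h2
  refine (eq_of_subset_of_card_le hsub ?_).symm
  rw [card_pair hab]
  omega

lemma DualStep.symm {t s : Finset V} (h : DualStep K F t s) : DualStep K F s t :=
  let ⟨hne, ht, hs, e, he, het, hes⟩ := h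
  ⟨hne.symm, hs, ht, e, he, hes, het⟩

instance : Std.Symm (DualStep K F) := ⟨fun _ _ => DualStep.symm⟩

lemma DualStep.mono (hFG : F ⊆ G) {t s : Finset V} (h : DualStep K F t s) : DualStep K G t s :=
  let ⟨hne, ht, hs, e, he, het, hes⟩ := h
  ⟨hne, ht, hs, e, hFG he, het, hes⟩

lemma reflTransGen_dualStep_of_subset {e t s : Finset V} (he : e ∈ F) (ht : IsTri K t)
    (hs : IsTri K s) (het : e ⊆ t) (hes : e ⊆ s) : Relation.ReflTransGen (DualStep K F) t s := by
  by_cases hts : t = s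
  · exact hts ▸ .refl
  · exact .single ⟨hts, ht, hs, e, he, het, hes⟩

lemma dualConnected_empty : DualConnected K (∅ : Finset (Finset V)) :=
  fun _ _ ⟨_, _, h, _⟩ => absurd h (notMem_empty _)

lemma dualConnected_of_forall_reflTransGen {t₀ : Finset V}
    (h : ∀ t, Incident K F t → Relation.ReflTransGen (DualStep K F) t t₀) : DualConnected K F :=
  fun t₁ t₂ h₁ h₂ => (h t₁ h₁).trans (symm_of (Relation.ReflTransGen (DualStep K F)) (h t₂ h₂))

lemma DualConnected.insert {e t : Finset V} (hF : DualConnected K F) (ht : IsTri K t)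
    (het : e ⊆ t) (hFt : F = ∅ ∨ ∃ f ∈ F, f ⊆ t) : DualConnected K (insert e F) := by
  refine dualConnected_of_forall_reflTransGen (t₀ := t) fun s ⟨hs, x, hx, hxs⟩ => ?_
  rcases mem_insert.1 hx with rfl | hxF
  · exact reflTransGen_dualStep_of_subset (mem_insert_self x F) hs ht hxs het
  · obtain ⟨f, hf, hft⟩ := hFt.resolve_left (ne_empty_of_mem hxF)
    exact Relation.ReflTransGen.mono (fun _ _ => DualStep.mono (subset_insert e F)) s t
      (hF s t ⟨hs, x, hxF, hxs⟩ ⟨ht, f, hf, hft⟩)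

end

variable {K : SComplex V} {η : Finset (Finset V)}

lemma bdry_empty : bdry (∅ : Finset (Finset V)) = ∅ := by
  ext τ
  simp [bdry]

lemma bdry_symmDiff (A B : Finset (Finset V)) : bdry (A ∆ B) = bdry A ∆ bdry B := by
  ext τ
  simp only [bdry, mem_symmDiff, mem_filter, mem_univ, true_and]
  rw [filter_symmDiff, ← Nat.not_even_iff_odd, ← Nat.not_even_iff_odd,
    ← Nat.not_even_iff_odd, even_card_symmDiff_iff]
  tauto

lemma bdry_singleton {σ : Finset V} {n : ℕ} (h : σ.card = n + 1) :
    bdry {σ} = σ.powersetCard n := by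
  ext τ
  simp only [bdry, mem_filter, mem_univ, true_and, filter_singleton, mem_powersetCard]
  split_ifs with hτ <;> simp_all

lemma isOneCycle_bdry_singleton {t : Finset V} (ht : IsTri K t) : IsOneCycle K (bdry {t}) := by
  rw [bdry_singleton (n := 2) ht.2]
  refine ⟨fun e he => ?_, fun v => ?_⟩
  · obtain ⟨het, he2⟩ := mem_powersetCard.1 he
    exact ⟨K.down_closed t ht.1 e het (card_pos.1 (by omega)), he2⟩
  · by_cases hv : v ∈ t
    · have h := card_filter_powersetCard_subset {v} t 2 (singleton_subset_iff.2 hv) (by simp)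
      rw [card_singleton, ht.2] at h
      simp only [singleton_subset_iff] at h
      rw [h]
      decide
    · rw [filter_false_of_mem fun e he hve => hv ((mem_powersetCard.1 he).1 hve)]
      simp

lemma isOneCycle_bdry {T : Finset (Finset V)} (hT : ∀ t ∈ T, IsTri K t) :
    IsOneCycle K (bdry T) := by
  induction T using Finset.induction_on with
  | empty => exact ⟨by simp [bdry_empty], by simp [bdry_empty]⟩
  | insert t T ht ih =>
    have hins : insert t T = {t} ∆ T := by
      rw [symmDiff_eq_union (disjoint_singleton_left.2 ht)]; rfl
    rw [hins, bdry_symmDiff]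
    exact (isOneCycle_bdry_singleton (hT t (mem_insert_self t T))).symmDiff
      (ih fun s hs => hT s (mem_insert_of_mem hs))

lemma Homol1.symmDiff_bdry {a b T : Finset (Finset V)} (hab : Homol1 K a b)
    (hT : ∀ t ∈ T, IsTri K t) : Homol1 K (a ∆ bdry T) b := by
  obtain ⟨T₀, hT₀, hbd⟩ := hab
  refine ⟨T ∆ T₀, forall_mem_symmDiff hT hT₀, ?_⟩
  rw [bdry_symmDiff, hbd, symmDiff_assoc, symmDiff_left_comm]

def bdryTraces (K : SComplex V) (η : Finset (Finset V)) : Set (Finset (Finset V)) :=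
  {P | ∃ T, (∀ t ∈ T, IsTri K t) ∧ bdry T ∩ η = P}

lemma empty_mem_bdryTraces : ∅ ∈ bdryTraces K η :=
  ⟨∅, by simp, by simp [bdry_empty]⟩

lemma symmDiff_mem_bdryTraces {P Q : Finset (Finset V)} (hP : P ∈ bdryTraces K η)
    (hQ : Q ∈ bdryTraces K η) : P ∆ Q ∈ bdryTraces K η := by
  obtain ⟨T, hT, rfl⟩ := hP
  obtain ⟨T', hT', rfl⟩ := hQ
  exact ⟨T ∆ T', forall_mem_symmDiff hT hT', by rw [bdry_symmDiff, symmDiff_inter]⟩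

lemma symmDiff_singleton_mem_bdryTraces_of_subset (hη : IsCocycle K η) {t a b : Finset V}
    (ht : IsTri K t) (ha : a ∈ η) (hb : b ∈ η) (hat : a ⊆ t) (hbt : b ⊆ t) :
    {a} ∆ {b} ∈ bdryTraces K η := by
  rcases eq_or_ne a b with rfl | hab
  · rw [symmDiff_self]
    exact empty_mem_bdryTraces
  refine ⟨{t}, by simpa using ht, ?_⟩
  rw [symmDiff_eq_union (disjoint_singleton.2 hab), ← insert_eq,
    ← hη.filter_subset_eq_pair ht ha hb hat hbt hab, bdry_singleton (n := 2) ht.2]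
  ext e
  simp only [mem_inter, mem_powersetCard, mem_filter]
  exact ⟨fun h => ⟨h.2, h.1.1⟩, fun h => ⟨⟨h.2, (hη.1 e h.1).2⟩, h.1⟩⟩

lemma symmDiff_singleton_mem_bdryTraces (hK : IsClosedSurface K) (hη : IsCocycle K η)
    (hconn : DualConnected K η) {a b : Finset V} (ha : a ∈ η) (hb : b ∈ η) :
    {a} ∆ {b} ∈ bdryTraces K η := by
  obtain ⟨ta, hta, hata⟩ := hK.pure2 a (hη.1 a ha).1
  obtain ⟨tb, htb, hbtb⟩ := hK.pure2 b (hη.1 b hb).1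
  suffices ∀ t, Relation.ReflTransGen (DualStep K η) ta t →
      ∀ c ∈ η, c ⊆ t → {a} ∆ {c} ∈ bdryTraces K η from
    this tb (hconn ta tb ⟨hta, a, ha, hata⟩ ⟨htb, b, hb, hbtb⟩) b hb hbtb
  intro t hpath
  induction hpath with
  | refl => exact fun c hc hct => symmDiff_singleton_mem_bdryTraces_of_subset hη hta ha hc hata hct
  | tail _ hstep ih =>
    obtain ⟨-, -, ht', g, hg, hgs, hgt'⟩ := hstep
    intro c hc hct
    have := symmDiff_mem_bdryTraces (ih g hg hgs)
      (symmDiff_singleton_mem_bdryTraces_of_subset hη ht' hg hc hgt' hct)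
    rwa [symmDiff_assoc, symmDiff_symmDiff_cancel_left] at this

lemma mem_bdryTraces_of_even_card (hK : IsClosedSurface K) (hη : IsCocycle K η)
    (hconn : DualConnected K η) {P : Finset (Finset V)} (hPη : P ⊆ η) (hP : Even P.card) :
    P ∈ bdryTraces K η :=
  mem_of_even_card empty_mem_bdryTraces (fun _ hx _ hy => symmDiff_mem_bdryTraces hx hy)
    (fun _ ha _ hb => symmDiff_singleton_mem_bdryTraces hK hη hconn ha hb) hPη hP

lemma exists_tri_across (hK : IsClosedSurface K) (hη : IsCocycle K η)
    (hconn : DualConnected K η) {F : Finset (Finset V)} (hFη : F ⊆ η) {f e : Finset V}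
    (hf : f ∈ F) (he : e ∈ η) (heF : e ∉ F) :
    ∃ t, IsTri K t ∧ (∃ x ∈ η, x ∉ F ∧ x ⊆ t) ∧ ∃ y ∈ F, y ⊆ t := by
  obtain ⟨tf, htf, hftf⟩ := hK.pure2 f (hη.1 f (hFη hf)).1
  obtain ⟨te, hte, hete⟩ := hK.pure2 e (hη.1 e he).1
  by_contra hnone
  have hreach : ∀ t, Relation.ReflTransGen (DualStep K η) tf t → ∃ y ∈ F, y ⊆ t := by
    intro t hpath
    induction hpath with
    | refl => exact ⟨f, hf, hftf⟩
    | tail _ hstep ih =>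
      obtain ⟨-, hs, -, g, hg, hgs, hgt⟩ := hstep
      by_cases hgF : g ∈ F
      · exact ⟨g, hgF, hgt⟩
      · exact absurd ⟨_, hs, ⟨g, hg, hgF, hgs⟩, ih⟩ hnone
  exact hnone ⟨te, hte, ⟨e, he, heF, hete⟩,
    hreach te (hconn tf te ⟨htf, f, hFη hf, hftf⟩ ⟨hte, e, he, hete⟩)⟩

lemma exists_dualConnected_subset_card (hK : IsClosedSurface K) (hη : IsCocycle K η)
    (hconn : DualConnected K η) : ∀ m ≤ η.card, ∃ F ⊆ η, F.card = m ∧ DualConnected K F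
  | 0, _ => ⟨∅, empty_subset η, card_empty, dualConnected_empty⟩
  | m + 1, hm => by
    obtain ⟨F, hFη, hFm, hF⟩ := exists_dualConnected_subset_card hK hη hconn m (by omega)
    obtain ⟨e₀, he₀, he₀F⟩ := exists_mem_notMem_of_card_lt_card (s := F) (t := η) (by omega)
    obtain ⟨e, he, heF, t, ht, het, hFt⟩ :
        ∃ e ∈ η, e ∉ F ∧ ∃ t, IsTri K t ∧ e ⊆ t ∧ (F = ∅ ∨ ∃ f ∈ F, f ⊆ t) := by
      rcases F.eq_empty_or_nonempty with rfl | ⟨f, hf⟩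
      · obtain ⟨t, ht, he₀t⟩ := hK.pure2 e₀ (hη.1 e₀ he₀).1
        exact ⟨e₀, he₀, he₀F, t, ht, he₀t, Or.inl rfl⟩
      · obtain ⟨t, ht, ⟨e, he, heF, het⟩, hft⟩ :=
          exists_tri_across hK hη hconn hFη hf he₀ he₀F
        exact ⟨e, he, heF, t, ht, het, Or.inr hft⟩
    exact ⟨insert e F, insert_subset he hFη, by rw [card_insert_of_notMem heF, hFm],
      hF.insert ht het hFt⟩

theorem statement3_general (K : SComplex V) (hK : IsClosedSurface K)
    (ζ : Finset (Finset V))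
    (η : Finset (Finset V)) (hη : IsCocycle K η) (hconn : DualConnected K η)
    (m : ℕ) (ζ₀ : Finset (Finset V))
    (hζ₀ : IsOneCycle K ζ₀) (hhom : Homol1 K ζ₀ ζ) (hm : (ζ₀ ∩ η).card = m) :
    ∃ γ, IsOneCycle K γ ∧ Homol1 K γ ζ ∧ (γ ∩ η).card = m ∧
      DualConnected K (γ ∩ η) := by
  obtain ⟨F, hFη, hFm, hF⟩ := exists_dualConnected_subset_card hK hη hconn m
    (hm ▸ card_le_card inter_subset_right)
  have hdiffη : (ζ₀ ∩ η) ∆ F ⊆ η :=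
    symmDiff_subset_union.trans (union_subset inter_subset_right hFη)
  obtain ⟨T, hT, hTη⟩ := mem_bdryTraces_of_even_card hK hη hconn hdiffη
    (even_card_symmDiff_of_card_eq (hm.trans hFm.symm))
  have hγη : (ζ₀ ∆ bdry T) ∩ η = F := by
    rw [symmDiff_inter, hTη, symmDiff_symmDiff_cancel_left]
  exact ⟨ζ₀ ∆ bdry T, hζ₀.symmDiff (isOneCycle_bdry hT), hhom.symmDiff_bdry hT, hγη ▸ hFm,
    hγη ▸ hF⟩

/-- Let `ζ` be a 1-cycle of `K` and `η` a connected 1-cocycle of `K`.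
If some cycle `ζ₀` homologous to `ζ` intersects `η` in exactly `m` edges, then there is a
cycle `γ` homologous to `ζ` also intersecting `η` in exactly `m` edges and such that the
dual edges corresponding to the edges of `γ ∩ η` induce a connected subgraph of the dual
graph `D_K`. -/
theorem statement3 (K : SComplex V) (hK : IsClosedSurface K)
    (ζ : Finset (Finset V)) (hζ : IsOneCycle K ζ)
    (η : Finset (Finset V)) (hη : IsCocycle K η) (hconn : DualConnected K η)
    (m : ℕ) (ζ₀ : Finset (Finset V))
    (hζ₀ : IsOneCycle K ζ₀) (hhom : Homol1 K ζ₀ ζ) (hm : (ζ₀ ∩ η).card = m) :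
    ∃ γ, IsOneCycle K γ ∧ Homol1 K γ ζ ∧ (γ ∩ η).card = m ∧
      DualConnected K (γ ∩ η) :=
  statement3_general K hK ζ η hη hconn m ζ₀ hζ₀ hhom hm

end

end ArxivCut
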